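/- Let H' be a finite graph of VC-dimension at most d, and let H be a graph obtained from H' by adding two new vertices a and b with arbitrary adjacencies (to each other and to the vertices of H'), keeping all edges of H'. Then every set S of vertices shattered by H satisfies 2^{|S| − 2} − 2 ≤ Σ_{i=0}^{d} C(|S|, i), where C(n,i) denotes a binomial coefficient. -/

import Mathlib

open SimpleGraph

variable {V : Type*}

/-- The ball of radius `r` centered at `v`. -/
def gBall (G : SimpleGraph V) (v : V) (r : ℕ) : Set V := {u | G.dist v u ≤ r}

/-- A graph is Helly if every (nonempty) family of pairwise intersecting balls
has a nonempty common intersection. -/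
def IsHelly (G : SimpleGraph V) : Prop :=
  ∀ F : Set (V × ℕ), F.Nonempty →
    (∀ p ∈ F, ∀ q ∈ F, (gBall G p.1 p.2 ∩ gBall G q.1 q.2).Nonempty) →
    (⋂ p ∈ F, gBall G p.1 p.2).Nonempty

/-- The eccentricity of a vertex. -/
noncomputable def ecc (G : SimpleGraph V) [Fintype V] (v : V) : ℕ :=
  Finset.univ.sup (fun u => G.dist v u)

/-- The radius of a graph. -/
noncomputable def grad (G : SimpleGraph V) [Fintype V] : ℕ :=
  sInf (Set.range (ecc G))

/-- The diameter of a graph. -/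
noncomputable def gdiam (G : SimpleGraph V) [Fintype V] : ℕ :=
  Finset.univ.sup (ecc G)

/-- The center of a graph: vertices of minimum eccentricity. -/
noncomputable def gcenter (G : SimpleGraph V) [Fintype V] : Set V :=
  {v | ecc G v = grad G}

/-- Distance from a vertex to a set of vertices. -/
noncomputable def distS (G : SimpleGraph V) (v : V) (S : Set V) : ℕ :=
  sInf (G.dist v '' S)

/-- The metric projection of a vertex onto a set of vertices. -/
noncomputable def proj (G : SimpleGraph V) (v : V) (S : Set V) : Set V :=
  {s ∈ S | G.dist v s = distS G v S}

/-- The slice `L(u,k,v)`: vertices on the metric interval from `u` to `v`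
at distance `k` from `u`. -/
def gslice (G : SimpleGraph V) (u : V) (k : ℕ) (v : V) : Set V :=
  {w | G.dist u w = k ∧ G.dist u w + G.dist w v = G.dist u v}

/-- A graph is `C₄`-free if it has no induced cycle on four vertices. -/
def C4Free (G : SimpleGraph V) : Prop :=
  ¬ ∃ a b c d : V, a ≠ b ∧ a ≠ c ∧ a ≠ d ∧ b ≠ c ∧ b ≠ d ∧ c ≠ d ∧
    G.Adj a b ∧ G.Adj b c ∧ G.Adj c d ∧ G.Adj d a ∧ ¬ G.Adj a c ∧ ¬ G.Adj b d

/-- The open neighbourhood of a set: vertices outside it with a neighbour in it. -/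
def nbhdSet (G : SimpleGraph V) (C : Set V) : Set V :=
  {v | v ∉ C ∧ ∃ c ∈ C, G.Adj v c}

/-- A vertex set `S` is shattered by a graph `G` if every subset of `S` is the
trace on `S` of some closed neighbourhood. -/
def Shatters {W : Type*} (G : SimpleGraph W) (S : Set W) : Prop :=
  ∀ T ⊆ S, ∃ v : W, S ∩ {u | u = v ∨ G.Adj v u} = T

/-!
Remove `a` and `b` from a set `S` shattered by `H`, leaving `S'` with `|S'| ≥ |S| - 2`. All
`2^|S'|` subsets of `S'` are traces `S' ∩ N[v]`, and at most two of them need `v ∈ {a, b}`, so the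
family `𝒯` of traces on `S'` of closed neighbourhoods of vertices of `H'` has at least `2^|S'| - 2`
members. A set shattered by `𝒯` is shattered by `H'`, so it has at most `d` elements, and the
Sauer–Shelah lemma bounds `|𝒯|` by `∑_{i ≤ d} C(|S'|, i)`.
-/

open scoped Finset

lemma Finset.card_le_sum_choose_of_forall_subset {α : Type*} [DecidableEq α]
    {𝒜 : Finset (Finset α)} {s : Finset α} {d : ℕ} (h𝒜 : ∀ u ∈ 𝒜, u ⊆ s)
    (hd : ∀ t, 𝒜.Shatters t → #t ≤ d) :
    #𝒜 ≤ ∑ k ∈ Finset.range (d + 1), (#s).choose k := by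
  have hsub : 𝒜.shatterer ⊆ (Finset.range (d + 1)).biUnion (s.powersetCard ·) := by
    intro t ht
    rw [Finset.mem_shatterer] at ht
    obtain ⟨u, hu, htu⟩ := ht.exists_superset
    exact Finset.mem_biUnion.2 ⟨#t, Finset.mem_range_succ_iff.2 (hd t ht),
      Finset.mem_powersetCard.2 ⟨htu.trans (h𝒜 u hu), rfl⟩⟩
  calc #𝒜 ≤ #𝒜.shatterer := Finset.card_le_card_shatterer 𝒜
    _ ≤ _ := (Finset.card_le_card hsub).trans Finset.card_biUnion_le
    _ = _ := by simp only [Finset.card_powersetCard]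

lemma Finset.card_image_le_card_image_sdiff_add {α β : Type*} [DecidableEq α] [DecidableEq β]
    (f : α → β) (s t : Finset α) : #(s.image f) ≤ #((s \ t).image f) + #t := by
  calc #(s.image f) ≤ #((s \ t).image f ∪ t.image f) := by
        refine Finset.card_le_card fun y hy => ?_
        obtain ⟨x, hx, rfl⟩ := Finset.mem_image.1 hy
        by_cases hxt : x ∈ t
        · exact Finset.mem_union_right _ (Finset.mem_image_of_mem f hxt)
        · exact Finset.mem_union_left _
            (Finset.mem_image_of_mem f (Finset.mem_sdiff.2 ⟨hx, hxt⟩))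
    _ ≤ #((s \ t).image f) + #(t.image f) := Finset.card_union_le _ _
    _ ≤ #((s \ t).image f) + #t := Nat.add_le_add_left Finset.card_image_le _

namespace SimpleGraph

variable (G : SimpleGraph V)

def closedNbhdTrace [DecidableEq V] [DecidableRel G.Adj] (s : Finset V) (v : V) : Finset V :=
  {u ∈ s | u = v ∨ G.Adj v u}

variable {G}

lemma closedNbhdTrace_subset [DecidableEq V] [DecidableRel G.Adj] (s : Finset V) (v : V) :
    G.closedNbhdTrace s v ⊆ s :=
  Finset.filter_subset _ _

lemma coe_closedNbhdTrace [DecidableEq V] [DecidableRel G.Adj] (s : Finset V) (v : V) :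
    (G.closedNbhdTrace s v : Set V) = ↑s ∩ {u | u = v ∨ G.Adj v u} := by
  ext; simp [closedNbhdTrace]

lemma _root_.Shatters.exists_closedNbhdTrace_eq [DecidableEq V] [DecidableRel G.Adj]
    {S : Set V} (hS : Shatters G S) {s t : Finset V} (hs : ↑s ⊆ S) (ht : t ⊆ s) :
    ∃ v, G.closedNbhdTrace s v = t := by
  obtain ⟨v, hv⟩ := hS t ((Finset.coe_subset.2 ht).trans hs)
  refine ⟨v, Finset.coe_injective ?_⟩
  rw [coe_closedNbhdTrace, ← Set.inter_eq_right.2 (Finset.coe_subset.2 ht), ← hv,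
    ← Set.inter_assoc, Set.inter_eq_left.2 hs]

lemma shatters_induce_preimage {X : Set V} {t : Finset V}
    (h : ∀ r ⊆ t, ∃ v ∈ X, ↑t ∩ {u | u = v ∨ G.Adj v u} = (r : Set V)) :
    Shatters (G.induce X) (Subtype.val ⁻¹' ↑t) := by
  classical
  intro R hR
  obtain ⟨v, hvX, hv⟩ := h {x ∈ t | ∃ y ∈ R, ↑y = x} (Finset.filter_subset _ _)
  refine ⟨⟨v, hvX⟩, Set.ext fun x => ?_⟩
  have hx := congrArg (x.1 ∈ ·) hv
  simp only [Set.mem_inter_iff, Set.mem_ofPred_eq, Finset.coe_filter, eq_iff_iff] at hx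
  simp only [Set.mem_inter_iff, Set.mem_preimage, Set.mem_ofPred_eq, Subtype.ext_iff, comap_adj,
    Function.Embedding.subtype_apply, hx]
  exact ⟨fun ⟨_, y, hy, hyx⟩ => Subtype.ext hyx ▸ hy, fun hxR => ⟨hR hxR, x, hxR, rfl⟩⟩

lemma card_le_of_shatters_image_closedNbhdTrace [DecidableEq V] [DecidableRel G.Adj]
    {X : Set V} {d : ℕ} (hVC : ∀ T : Set X, Shatters (G.induce X) T → T.ncard ≤ d)
    {U s t : Finset V} (hUX : ↑U ⊆ X) (hsX : ↑s ⊆ X)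
    (ht : (U.image (G.closedNbhdTrace s)).Shatters t) : #t ≤ d := by
  have hts : t ⊆ s := by
    obtain ⟨u, hu, htu⟩ := ht.exists_superset
    obtain ⟨v, -, rfl⟩ := Finset.mem_image.1 hu
    exact htu.trans (closedNbhdTrace_subset s v)
  have hshat : Shatters (G.induce X) (Subtype.val ⁻¹' ↑t) := by
    refine shatters_induce_preimage fun r hr => ?_
    obtain ⟨u, hu, rfl⟩ := ht hr
    obtain ⟨v, hvU, rfl⟩ := Finset.mem_image.1 hu
    refine ⟨v, hUX hvU, ?_⟩
    rw [Finset.coe_inter, coe_closedNbhdTrace, ← Set.inter_assoc,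
      Set.inter_eq_left.2 (Finset.coe_subset.2 hts)]
  calc #t = (↑t : Set V).ncard := (Set.ncard_coe_finset t).symm
    _ = (Subtype.val ⁻¹' ↑t : Set X).ncard := by
      rw [Set.ncard_preimage_of_injective_subset_range Subtype.val_injective
        (by rw [Subtype.range_coe]; exact (Finset.coe_subset.2 hts).trans hsX)]
    _ ≤ d := hVC _ hshat

end SimpleGraph

theorem stmt19_general (W : Type*) [Fintype W] (H : SimpleGraph W) (a b : W)
    (d : ℕ)
    (hVC : ∀ S' : Set ({v : W | v ≠ a ∧ v ≠ b} : Set W),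
      Shatters (H.induce {v : W | v ≠ a ∧ v ≠ b}) S' → S'.ncard ≤ d)
    (S : Set W) (hS : Shatters H S) :
    2 ^ (S.ncard - 2) - 2 ≤ ∑ i ∈ Finset.range (d + 1), (S.ncard).choose i := by
  classical
  set s := S.toFinset \ {a, b}
  set 𝒯 := (Finset.univ \ {a, b}).image (H.closedNbhdTrace s)
  have hsS : ↑s ⊆ S := fun x hx => by simp_all [s]
  have hsX : ↑s ⊆ {v : W | v ≠ a ∧ v ≠ b} := fun x hx => by simp_all [s]
  have hcard : S.ncard - 2 ≤ #s ∧ #s ≤ S.ncard := by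
    rw [Set.ncard_eq_toFinset_card']
    exact ⟨(Nat.sub_le_sub_left Finset.card_le_two _).trans (Finset.le_card_sdiff _ _),
      Finset.card_le_card Finset.sdiff_subset⟩
  have htraces : 2 ^ #s ≤ #𝒯 + 2 :=
    calc 2 ^ #s = #s.powerset := (Finset.card_powerset s).symm
      _ ≤ #(Finset.univ.image (H.closedNbhdTrace s)) := Finset.card_le_card fun t ht => by
        obtain ⟨v, hv⟩ := hS.exists_closedNbhdTrace_eq hsS (Finset.mem_powerset.1 ht)
        exact Finset.mem_image.2 ⟨v, Finset.mem_univ v, hv⟩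
      _ ≤ #𝒯 + #{a, b} := Finset.card_image_le_card_image_sdiff_add _ _ _
      _ ≤ #𝒯 + 2 := Nat.add_le_add_left Finset.card_le_two _
  have hsauer : #𝒯 ≤ ∑ k ∈ Finset.range (d + 1), (#s).choose k := by
    refine Finset.card_le_sum_choose_of_forall_subset (fun u hu => ?_)
      fun t ht => H.card_le_of_shatters_image_closedNbhdTrace hVC (fun x _ => by simp_all) hsX ht
    obtain ⟨v, -, rfl⟩ := Finset.mem_image.1 hu
    exact SimpleGraph.closedNbhdTrace_subset s v
  calc 2 ^ (S.ncard - 2) - 2 ≤ 2 ^ #s - 2 :=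
        Nat.sub_le_sub_right (Nat.pow_le_pow_right two_pos hcard.1) 2
    _ ≤ #𝒯 := Nat.sub_le_iff_le_add.2 htraces
    _ ≤ ∑ k ∈ Finset.range (d + 1), (#s).choose k := hsauer
    _ ≤ ∑ k ∈ Finset.range (d + 1), (S.ncard).choose k :=
      Finset.sum_le_sum fun k _ => Nat.choose_le_choose k hcard.2

/-- Let `H` be a finite graph obtained from a graph `H'` of
VC-dimension at most `d` by adding two new vertices `a` and `b` with arbitrary
adjacencies (keeping all edges of `H'`, i.e. `H'` is the subgraph of `H` induced
on the vertices other than `a` and `b`). Then every set `S` shattered by `H`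
satisfies `2^(|S| − 2) − 2 ≤ Σ_{i=0}^{d} C(|S|, i)`. -/
theorem stmt19 (W : Type*) [Fintype W] (H : SimpleGraph W) (a b : W) (hab : a ≠ b)
    (d : ℕ)
    (hVC : ∀ S' : Set ({v : W | v ≠ a ∧ v ≠ b} : Set W),
      Shatters (H.induce {v : W | v ≠ a ∧ v ≠ b}) S' → S'.ncard ≤ d)
    (S : Set W) (hS : Shatters H S) :
    2 ^ (S.ncard - 2) - 2 ≤ ∑ i ∈ Finset.range (d + 1), (S.ncard).choose i :=
  stmt19_general W H a b d hVC S hS
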